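/- arXiv:1606.09144 — 2 statements merged into one kernel-verified Lean document; each statement's English description precedes it below -/
import Mathlib

section
/- Let m > 0. Assuming the reproducing kernel norm estimate ‖K_{(m,w)}‖_{(m,2)}^2 ≍ |w|^{m-2} e^{2|w|^m} as |w| → ∞, one has ‖∂/∂w̄ K_{(m,w)}‖_{(m,2)}^2 ≍ |w|^{3m-4} e^{2|w|^m} ≍ ‖K_{(m,w)}‖_{(m,2)}^2 |w|^{2m-2} as |w| → ∞. -/
/-!
Write `x = |w|²` and `a n = ‖z ^ n‖⁻²`, so that `‖K_w‖² = Σ a n xⁿ` and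
`‖∂K_w‖² = Σ n² a n xⁿ⁻¹`. Since `(n δ)² ≤ 4 (1 + δ)ⁿ` for `0 < δ ≤ 1`, the second
series is at most `4 / (δ² x)` times the first one at `x (1 + δ)`; for `δ = |w|⁻ᵐ` this
enlargement changes `|w|ᵐ` only by `O(1)`, which gives the upper bound `|w|^(2m-2) ‖K_w‖²`.
For the lower bound split at `N ≈ ε |w|ᵐ`: the terms with `n ≥ N` carry the factor
`n² / x ≥ N² / x`, while those with `n < N` are at most `eᴺ` times the series at `x / e`,
which by the assumed growth is exponentially smaller than `‖K_w‖²`.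
-/

open MeasureTheory Real Complex

/-- The squared `F_{(m,2)}`-norm of the monomial `z ^ n`. -/
noncomputable def monomialNormSq (m : ℝ) (n : ℕ) : ℝ :=
  ∫ z : ℂ, ‖z‖ ^ (2 * (n : ℝ)) * Real.exp (-2 * ‖z‖ ^ m)

/-- `‖K_{(m,w)}‖² = Σ_n |e_n(w)|²` for the orthonormal basis of normalized monomials. -/
noncomputable def kernelNormSq (m : ℝ) (w : ℂ) : ℝ :=
  ∑' n : ℕ, ‖w‖ ^ (2 * (n : ℝ)) / monomialNormSq m n

/-- `‖∂/∂w̄ K_{(m,w)}‖² = Σ_n |e_n'(w)|²` for the orthonormal basis of normalized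
monomials. -/
noncomputable def kernelDerivNormSq (m : ℝ) (w : ℂ) : ℝ :=
  ∑' n : ℕ, (n : ℝ) ^ 2 * ‖w‖ ^ (2 * ((n : ℝ) - 1)) / monomialNormSq m n

open Filter

section PowerSum

variable {a : ℕ → ℝ} {x y δ : ℝ}

noncomputable def powerSum (a : ℕ → ℝ) (x : ℝ) : ℝ := ∑' n, a n * x ^ n

noncomputable def sqWeightedPowerSum (a : ℕ → ℝ) (x : ℝ) : ℝ :=
  ∑' n : ℕ, a n * ((n : ℝ) ^ 2 * x ^ (n - 1))

lemma powerSum_nonneg (ha : ∀ n, 0 ≤ a n) (hx : 0 ≤ x) : 0 ≤ powerSum a x :=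
  tsum_nonneg fun n => mul_nonneg (ha n) (pow_nonneg hx n)

lemma summable_mul_pow_of_powerSum_ne_zero (ha : ∀ n, 0 ≤ a n) (hx : 0 ≤ x) (hxy : x ≤ y)
    (hy : powerSum a y ≠ 0) : Summable fun n => a n * x ^ n := by
  have hsy : Summable fun n => a n * y ^ n := by
    by_contra h
    exact hy (tsum_eq_zero_of_not_summable h)
  exact hsy.of_nonneg_of_le (fun n => mul_nonneg (ha n) (pow_nonneg hx n))
    fun n => mul_le_mul_of_nonneg_left (pow_le_pow_left₀ hx hxy n) (ha n)

lemma sq_mul_sq_le_four_mul_one_add_pow (h0 : 0 ≤ δ) (h1 : δ ≤ 1) (n : ℕ) :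
    ((n : ℝ) * δ) ^ 2 ≤ 4 * (1 + δ) ^ n := by
  induction n with
  | zero => simp
  | succ n ih =>
    have bernoulli := mul_le_mul_of_nonneg_left (one_add_mul_le_pow (by linarith : -2 ≤ δ) n) h0
    have hpow : (1 + δ) ^ (n + 1) = (1 + δ) ^ n + δ * (1 + δ) ^ n := by ring
    push_cast
    nlinarith

lemma sq_mul_pow_pred_le (hx : 0 < x) (h0 : 0 < δ) (h1 : δ ≤ 1) (n : ℕ) :
    (n : ℝ) ^ 2 * x ^ (n - 1) ≤ 4 / (δ ^ 2 * x) * (x * (1 + δ)) ^ n := by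
  cases n with
  | zero => simp; positivity
  | succ n =>
    have h := sq_mul_sq_le_four_mul_one_add_pow h0.le h1 (n + 1)
    rw [Nat.add_sub_cancel, mul_pow, pow_succ x n, div_mul_eq_mul_div,
      le_div_iff₀ (by positivity)]
    calc ((n + 1 : ℕ) : ℝ) ^ 2 * x ^ n * (δ ^ 2 * x)
        = (((n + 1 : ℕ) : ℝ) * δ) ^ 2 * (x ^ n * x) := by ring
      _ ≤ 4 * (1 + δ) ^ (n + 1) * (x ^ n * x) := by gcongr
      _ = _ := by ring

lemma sqWeightedPowerSum_term_le (ha : ∀ n, 0 ≤ a n) (hx : 0 < x) (h0 : 0 < δ) (h1 : δ ≤ 1)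
    (n : ℕ) :
    a n * ((n : ℝ) ^ 2 * x ^ (n - 1)) ≤ 4 / (δ ^ 2 * x) * (a n * (x * (1 + δ)) ^ n) := by
  rw [mul_left_comm _ (a n)]
  exact mul_le_mul_of_nonneg_left (sq_mul_pow_pred_le hx h0 h1 n) (ha n)

lemma summable_sqWeightedPowerSum_term (ha : ∀ n, 0 ≤ a n) (hx : 0 < x) (h0 : 0 < δ)
    (h1 : δ ≤ 1)
    (hs : Summable fun n => a n * (x * (1 + δ)) ^ n) :
    Summable fun n : ℕ => a n * ((n : ℝ) ^ 2 * x ^ (n - 1)) :=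
  (hs.mul_left _).of_nonneg_of_le (fun n => mul_nonneg (ha n) (by positivity))
    (sqWeightedPowerSum_term_le ha hx h0 h1)

lemma sqWeightedPowerSum_le (ha : ∀ n, 0 ≤ a n) (hx : 0 < x) (h0 : 0 < δ) (h1 : δ ≤ 1)
    (hs : Summable fun n => a n * (x * (1 + δ)) ^ n) :
    sqWeightedPowerSum a x ≤ 4 / (δ ^ 2 * x) * powerSum a (x * (1 + δ)) := by
  rw [powerSum, ← tsum_mul_left]
  exact (summable_sqWeightedPowerSum_term ha hx h0 h1 hs).tsum_le_tsum
    (sqWeightedPowerSum_term_le ha hx h0 h1) (hs.mul_left _)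

lemma sq_mul_pow_le_add {Q : ℝ} (hx : 0 ≤ x) (hQ : 1 ≤ Q) (N n : ℕ) :
    (N : ℝ) ^ 2 * x ^ n ≤ x * ((n : ℝ) ^ 2 * x ^ (n - 1)) + N ^ 2 * Q ^ N * (x / Q) ^ n := by
  rcases le_or_gt N n with hNn | hnN
  · have hshift : x * ((n : ℝ) ^ 2 * x ^ (n - 1)) = (n : ℝ) ^ 2 * x ^ n := by
      cases n with
      | zero => simp
      | succ n => rw [Nat.add_sub_cancel, pow_succ]; ring
    rw [hshift]
    calc (N : ℝ) ^ 2 * x ^ n ≤ (n : ℝ) ^ 2 * x ^ n := by gcongr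
      _ ≤ _ := le_add_of_nonneg_right (by positivity)
  · have hsplit : x ^ n = Q ^ n * (x / Q) ^ n := by
      rw [← mul_pow, mul_div_cancel₀ x (by positivity)]
    calc (N : ℝ) ^ 2 * x ^ n ≤ N ^ 2 * Q ^ N * (x / Q) ^ n := by
          rw [hsplit, ← mul_assoc]
          gcongr
      _ ≤ _ := le_add_of_nonneg_left (by positivity)

lemma sq_mul_powerSum_le (ha : ∀ n, 0 ≤ a n) (hx : 0 ≤ x) {Q : ℝ} (hQ : 1 ≤ Q) (N : ℕ)
    (hsx : Summable fun n => a n * x ^ n) (hsQ : Summable fun n => a n * (x / Q) ^ n)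
    (hsD : Summable fun n : ℕ => a n * ((n : ℝ) ^ 2 * x ^ (n - 1))) :
    (N : ℝ) ^ 2 * powerSum a x
      ≤ x * sqWeightedPowerSum a x + N ^ 2 * Q ^ N * powerSum a (x / Q) := by
  simp only [powerSum, sqWeightedPowerSum, ← tsum_mul_left]
  rw [← (hsD.mul_left x).tsum_add (hsQ.mul_left _)]
  refine (hsx.mul_left _).tsum_le_tsum (fun n => ?_) ((hsD.mul_left x).add (hsQ.mul_left _))
  have h := mul_le_mul_of_nonneg_left (sq_mul_pow_le_add hx hQ N n) (ha n)
  linarith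

end PowerSum

section Growth

variable {m r : ℝ}

noncomputable def kernelGrowth (m r : ℝ) : ℝ := r ^ (m - 2) * Real.exp (2 * r ^ m)

lemma kernelGrowth_pos (hr : 0 < r) : 0 < kernelGrowth m r := by
  unfold kernelGrowth; positivity

lemma rpow_two_mul_sub_two (hr : 0 < r) : r ^ (2 * m - 2) = (r ^ m) ^ 2 / r ^ 2 := by
  rw [Real.rpow_sub hr, Real.rpow_two, ← Real.rpow_natCast (r ^ m), ← Real.rpow_mul hr.le,
    mul_comm m]
  norm_num

lemma rpow_three_mul_sub_four_mul_exp (hr : 0 < r) :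
    r ^ (3 * m - 4) * Real.exp (2 * r ^ m) = r ^ (2 * m - 2) * kernelGrowth m r := by
  rw [kernelGrowth, ← mul_assoc, ← Real.rpow_add hr]
  ring_nf

lemma mul_sqrt_one_add_inv_rpow_le (hm : 0 < m) (hr : 0 < r) (hrm : m ≤ r ^ m) :
    (r * √(1 + (r ^ m)⁻¹)) ^ m ≤ r ^ m + m := by
  set δ := (r ^ m)⁻¹
  have hrm0 : 0 < r ^ m := by positivity
  have hy : |δ * (1 / 2 * m)| ≤ 1 := by
    rw [abs_of_nonneg (by positivity)]
    calc δ * (1 / 2 * m) = m / 2 / r ^ m := by ring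
      _ ≤ 1 := by rw [div_le_one hrm0]; linarith
  have hexp : Real.exp (δ * (1 / 2 * m)) ≤ 1 + 2 * (δ * (1 / 2 * m)) := by
    have := (abs_le.1 (abs_exp_sub_one_le hy)).2
    rw [abs_of_nonneg (by positivity)] at this
    linarith
  calc (r * √(1 + δ)) ^ m = r ^ m * (1 + δ) ^ (1 / 2 * m) := by
        rw [Real.mul_rpow hr.le (Real.sqrt_nonneg _), Real.sqrt_eq_rpow,
          ← Real.rpow_mul (by positivity)]
    _ ≤ r ^ m * Real.exp (δ * (1 / 2 * m)) := by
        rw [Real.exp_mul]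
        gcongr
        linarith [Real.add_one_le_exp δ]
    _ ≤ r ^ m * (1 + 2 * (δ * (1 / 2 * m))) := by gcongr
    _ = r ^ m + m := by
        have : r ^ m * δ = 1 := mul_inv_cancel₀ hrm0.ne'
        linear_combination m * this

lemma kernelGrowth_mul_sqrt_le (hm : 0 < m) (hr : 0 < r) (hrm : m ≤ r ^ m) :
    kernelGrowth m (r * √(1 + (r ^ m)⁻¹)) ≤ 2 * Real.exp (2 * m) * kernelGrowth m r := by
  set r' := r * √(1 + (r ^ m)⁻¹)
  have hrr' : r ≤ r' := le_mul_of_one_le_right hr.le (by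
    rw [Real.one_le_sqrt]; linarith [inv_nonneg.2 (Real.rpow_nonneg hr.le m)])
  have hr' : 0 < r' := hr.trans_le hrr'
  have hm' := mul_sqrt_one_add_inv_rpow_le hm hr hrm
  have hpre : r' ^ (m - 2) ≤ 2 * r ^ (m - 2) := by
    rw [Real.rpow_sub hr', Real.rpow_sub hr, Real.rpow_two, Real.rpow_two, mul_div_assoc']
    gcongr
    linarith
  calc kernelGrowth m r' ≤ 2 * r ^ (m - 2) * Real.exp (2 * m + 2 * r ^ m) := by
        unfold kernelGrowth
        gcongr
        linarith
    _ = _ := by rw [kernelGrowth, Real.exp_add]; ring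

lemma kernelGrowth_mul_exp_neg_half_le (hm : 0 ≤ m) (hr : 0 < r) :
    kernelGrowth m (r * Real.exp (-1 / 2))
      ≤ Real.exp 1 * r ^ (m - 2) * Real.exp (2 * (Real.exp (-m / 2) * r ^ m)) := by
  have hpow : ∀ p : ℝ, (r * Real.exp (-1 / 2)) ^ p = Real.exp (-p / 2) * r ^ p := fun p => by
    rw [Real.mul_rpow hr.le (Real.exp_pos _).le, ← Real.exp_mul, mul_comm]
    ring_nf
  rw [kernelGrowth, hpow, hpow]
  gcongr
  linarith

end Growth

section Asymptotics

variable {a : ℕ → ℝ} {m c C : ℝ}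

lemma one_sub_exp_neg_half_pos (hm : 0 < m) : 0 < 1 - Real.exp (-m / 2) :=
  sub_pos.2 (Real.exp_lt_one_iff.2 (by linarith))

lemma summable_mul_pow_of_eventually_le (ha : ∀ n, 0 ≤ a n) (hc : 0 < c)
    (hS : ∀ᶠ r in atTop, c * kernelGrowth m r ≤ powerSum a (r ^ 2)) :
    ∀ x, 0 ≤ x → Summable fun n => a n * x ^ n := by
  intro x hx
  obtain ⟨r, hSr, hxr, hr⟩ :=
    (hS.and (((tendsto_pow_atTop two_ne_zero).eventually_ge_atTop x).and
      (eventually_gt_atTop 0))).exists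
  have hpos : 0 < powerSum a (r ^ 2) := (mul_pos hc (kernelGrowth_pos hr)).trans_le hSr
  exact summable_mul_pow_of_powerSum_ne_zero ha hx hxr hpos.ne'

theorem eventually_sqWeightedPowerSum_le (hm : 0 < m) (hC : 0 ≤ C) (ha : ∀ n, 0 ≤ a n)
    (hsum : ∀ x, 0 ≤ x → Summable fun n => a n * x ^ n)
    (hS : ∀ᶠ r in atTop, powerSum a (r ^ 2) ≤ C * kernelGrowth m r) :
    ∀ᶠ r in atTop, sqWeightedPowerSum a (r ^ 2)
      ≤ 8 * Real.exp (2 * m) * C * (r ^ (2 * m - 2) * kernelGrowth m r) := by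
  obtain ⟨R, hR⟩ := eventually_atTop.1 hS
  filter_upwards [eventually_ge_atTop R, eventually_gt_atTop 0,
    (tendsto_rpow_atTop hm).eventually_ge_atTop (max m 1)] with r hRr hr hrm
  set δ := (r ^ m)⁻¹
  set r' := r * √(1 + δ)
  have hδ0 : 0 < δ := by positivity
  have hδ1 : δ ≤ 1 := inv_le_one_of_one_le₀ (le_of_max_le_right hrm)
  have hr'sq : r' ^ 2 = r ^ 2 * (1 + δ) := by
    rw [mul_pow, Real.sq_sqrt (by positivity)]
  have hrr' : r ≤ r' := le_mul_of_one_le_right hr.le (Real.one_le_sqrt.2 (by linarith))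
  have hfactor : 4 / (δ ^ 2 * r ^ 2) = 4 * r ^ (2 * m - 2) := by
    rw [rpow_two_mul_sub_two hr, inv_pow]
    field_simp
  calc sqWeightedPowerSum a (r ^ 2) ≤ 4 / (δ ^ 2 * r ^ 2) * powerSum a (r ^ 2 * (1 + δ)) :=
        sqWeightedPowerSum_le ha (by positivity) hδ0 hδ1 (hsum _ (by positivity))
    _ = 4 * r ^ (2 * m - 2) * powerSum a (r' ^ 2) := by rw [hfactor, hr'sq]
    _ ≤ 4 * r ^ (2 * m - 2) * (C * (2 * Real.exp (2 * m) * kernelGrowth m r)) := by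
        gcongr
        exact (hR r' (hRr.trans hrr')).trans
          (by gcongr; exact kernelGrowth_mul_sqrt_le hm hr (le_of_max_le_left hrm))
    _ = _ := by ring

/-- Shrinking `r` by `e^{-1/2}` costs the factor `exp (-2 ε rᵐ)` in the growth, with
`ε = 1 - e^{-m/2}`; with `N = ⌈ε rᵐ⌉` this beats `e ^ N`. -/
lemma eventually_exp_ceil_mul_powerSum_le (hm : 0 < m) (hc : 0 < c) (hC : 0 ≤ C)
    (ha : ∀ n, 0 ≤ a n)
    (hS : ∀ᶠ r in atTop, c * kernelGrowth m r ≤ powerSum a (r ^ 2) ∧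
      powerSum a (r ^ 2) ≤ C * kernelGrowth m r) :
    ∀ᶠ r in atTop, Real.exp 1 ^ ⌈(1 - Real.exp (-m / 2)) * r ^ m⌉₊ *
      powerSum a (r ^ 2 / Real.exp 1) ≤ powerSum a (r ^ 2) / 2 := by
  set ε := 1 - Real.exp (-m / 2)
  have hε : 0 < ε := one_sub_exp_neg_half_pos hm
  have hshrink : Tendsto (fun r => r * Real.exp (-1 / 2)) atTop atTop :=
    tendsto_id.atTop_mul_const (Real.exp_pos _)
  filter_upwards [hS, hshrink.eventually (hS.mono fun _ => And.right), eventually_gt_atTop 0,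
    (tendsto_exp_atTop.comp ((tendsto_rpow_atTop hm).const_mul_atTop hε)).eventually_ge_atTop
      (2 * C * Real.exp 1 ^ 2 / c)] with r hSr hsmall hr hlarge
  rw [Function.comp_apply] at hlarge
  set t := r ^ m
  have hN : Real.exp 1 ^ ⌈ε * t⌉₊ ≤ Real.exp (ε * t + 1) := by
    rw [Real.exp_one_pow]
    exact Real.exp_le_exp.2 (Nat.ceil_lt_add_one (by positivity)).le
  have hsq : r ^ 2 / Real.exp 1 = (r * Real.exp (-1 / 2)) ^ 2 := by
    rw [mul_pow, ← Real.exp_nat_mul, div_eq_mul_inv, ← Real.exp_neg]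
    norm_num
  have hexp : Real.exp (ε * t + 1) * Real.exp (2 * (Real.exp (-m / 2) * t))
      = Real.exp 1 * Real.exp (2 * t) / Real.exp (ε * t) := by
    rw [← Real.exp_add, ← Real.exp_add, ← Real.exp_sub]
    congr 1
    ring
  calc Real.exp 1 ^ ⌈ε * t⌉₊ * powerSum a (r ^ 2 / Real.exp 1)
      ≤ Real.exp (ε * t + 1) *
          (C * (Real.exp 1 * r ^ (m - 2) * Real.exp (2 * (Real.exp (-m / 2) * t)))) := by
        rw [hsq]
        gcongr
        · exact powerSum_nonneg ha (by positivity)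
        · exact hsmall.trans (by gcongr; exact kernelGrowth_mul_exp_neg_half_le hm.le hr)
    _ = C * Real.exp 1 ^ 2 / Real.exp (ε * t) * kernelGrowth m r := by
        rw [kernelGrowth]
        calc _ = C * Real.exp 1 * r ^ (m - 2) *
              (Real.exp (ε * t + 1) * Real.exp (2 * (Real.exp (-m / 2) * t))) := by ring
          _ = _ := by rw [hexp]; ring
    _ ≤ c / 2 * kernelGrowth m r := by
        refine mul_le_mul_of_nonneg_right ?_ (kernelGrowth_pos hr).le
        rw [div_le_iff₀ (Real.exp_pos _)]
        have := (div_le_iff₀ hc).1 hlarge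
        linarith
    _ ≤ powerSum a (r ^ 2) / 2 := by linarith [hSr.1]

theorem eventually_le_sqWeightedPowerSum (hm : 0 < m) (hc : 0 < c) (hC : 0 ≤ C)
    (ha : ∀ n, 0 ≤ a n) (hsum : ∀ x, 0 ≤ x → Summable fun n => a n * x ^ n)
    (hS : ∀ᶠ r in atTop, c * kernelGrowth m r ≤ powerSum a (r ^ 2) ∧
      powerSum a (r ^ 2) ≤ C * kernelGrowth m r) :
    ∀ᶠ r in atTop, (1 - Real.exp (-m / 2)) ^ 2 / 2 * (r ^ (2 * m - 2) * powerSum a (r ^ 2))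
      ≤ sqWeightedPowerSum a (r ^ 2) := by
  set ε := 1 - Real.exp (-m / 2)
  have hε : 0 < ε := one_sub_exp_neg_half_pos hm
  filter_upwards [eventually_exp_ceil_mul_powerSum_le hm hc hC ha hS, eventually_gt_atTop 0]
    with r hhead hr
  set N := ⌈ε * r ^ m⌉₊
  have hεN : (ε * r ^ m) ^ 2 ≤ (N : ℝ) ^ 2 := by
    gcongr
    exact Nat.le_ceil _
  have hsplit := sq_mul_powerSum_le (x := r ^ 2) ha (by positivity) (Real.one_le_exp zero_le_one) N
    (hsum _ (by positivity)) (hsum _ (by positivity))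
    (summable_sqWeightedPowerSum_term ha (by positivity) one_pos le_rfl (hsum _ (by positivity)))
  have hhead' := mul_le_mul_of_nonneg_left hhead (sq_nonneg (N : ℝ))
  have hS0 := powerSum_nonneg ha (sq_nonneg r)
  rw [rpow_two_mul_sub_two hr]
  calc ε ^ 2 / 2 * ((r ^ m) ^ 2 / r ^ 2 * powerSum a (r ^ 2))
      = (ε * r ^ m) ^ 2 * powerSum a (r ^ 2) / (2 * r ^ 2) := by ring
    _ ≤ N ^ 2 * powerSum a (r ^ 2) / (2 * r ^ 2) := by gcongr
    _ ≤ sqWeightedPowerSum a (r ^ 2) := by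
        rw [div_le_iff₀ (by positivity)]
        linarith

end Asymptotics

lemma kernelNormSq_eq_powerSum (m : ℝ) (w : ℂ) :
    kernelNormSq m w = powerSum (fun n => (monomialNormSq m n)⁻¹) (‖w‖ ^ 2) := by
  refine tsum_congr fun n => ?_
  rw [show 2 * (n : ℝ) = ((2 * n : ℕ) : ℝ) by push_cast; ring, Real.rpow_natCast, pow_mul,
    div_eq_inv_mul]

lemma kernelDerivNormSq_eq_sqWeightedPowerSum (m : ℝ) (w : ℂ) :
    kernelDerivNormSq m w
      = sqWeightedPowerSum (fun n => (monomialNormSq m n)⁻¹) (‖w‖ ^ 2) := by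
  refine tsum_congr fun n => ?_
  cases n with
  | zero => simp
  | succ n =>
    rw [show 2 * (((n + 1 : ℕ) : ℝ) - 1) = ((2 * n : ℕ) : ℝ) by push_cast; ring,
      Real.rpow_natCast, pow_mul, Nat.add_sub_cancel]
    ring

lemma two_sided_bounds_of_le {P G S D c l u : ℝ} (hP : 0 ≤ P) (hG : 0 ≤ G) (hc : 0 < c)
    (hl : 0 ≤ l) (hu : 0 ≤ u) (hcS : c * G ≤ S) (hlo : l * (P * S) ≤ D)
    (hup : D ≤ u * (P * G)) :
    (l * min c 1 * (P * G) ≤ D ∧ D ≤ u * max 1 c⁻¹ * (P * G)) ∧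
      (l * min c 1 * (S * P) ≤ D ∧ D ≤ u * max 1 c⁻¹ * (S * P)) := by
  have hS : 0 ≤ S := (mul_nonneg hc.le hG).trans hcS
  have hGS : G ≤ c⁻¹ * S := by rwa [le_inv_mul_iff₀ hc]
  have hPG : 0 ≤ P * G := mul_nonneg hP hG
  have hPS : 0 ≤ P * S := mul_nonneg hP hS
  rw [mul_comm S]
  refine ⟨⟨?_, ?_⟩, ?_, ?_⟩
  · calc l * min c 1 * (P * G) ≤ l * c * (P * G) := by gcongr; exact min_le_left c 1
      _ ≤ l * (P * S) := by rw [mul_assoc, mul_left_comm c]; gcongr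
      _ ≤ D := hlo
  · exact hup.trans (mul_le_mul_of_nonneg_right (le_mul_of_one_le_right hu (le_max_left _ _)) hPG)
  · exact (mul_le_mul_of_nonneg_right (mul_le_of_le_one_right hl (min_le_right _ _)) hPS).trans hlo
  · calc D ≤ u * (P * (c⁻¹ * S)) := hup.trans (by gcongr)
      _ = u * c⁻¹ * (P * S) := by ring
      _ ≤ u * max 1 c⁻¹ * (P * S) := by gcongr; exact le_max_right 1 c⁻¹

theorem kernel_deriv_norm_estimate (m : ℝ) (hm : 0 < m)
    (hK : ∃ c C R : ℝ, 0 < c ∧ 0 < C ∧ 0 < R ∧ ∀ w : ℂ, R ≤ ‖w‖ →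
      c * (‖w‖ ^ (m - 2) * Real.exp (2 * ‖w‖ ^ m)) ≤ kernelNormSq m w ∧
      kernelNormSq m w ≤ C * (‖w‖ ^ (m - 2) * Real.exp (2 * ‖w‖ ^ m))) :
    ∃ c C R : ℝ, 0 < c ∧ 0 < C ∧ 0 < R ∧ ∀ w : ℂ, R ≤ ‖w‖ →
      (c * (‖w‖ ^ (3 * m - 4) * Real.exp (2 * ‖w‖ ^ m))
          ≤ kernelDerivNormSq m w ∧
        kernelDerivNormSq m w
          ≤ C * (‖w‖ ^ (3 * m - 4) * Real.exp (2 * ‖w‖ ^ m))) ∧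
      (c * (kernelNormSq m w * ‖w‖ ^ (2 * m - 2)) ≤ kernelDerivNormSq m w ∧
        kernelDerivNormSq m w ≤ C * (kernelNormSq m w * ‖w‖ ^ (2 * m - 2))) := by
  obtain ⟨c, C, R, hc, hC, hR, hK⟩ := hK
  set a : ℕ → ℝ := fun n => (monomialNormSq m n)⁻¹
  have ha : ∀ n, 0 ≤ a n := fun n => inv_nonneg.2 (integral_nonneg fun z => by positivity)
  have hS : ∀ᶠ r in atTop, c * kernelGrowth m r ≤ powerSum a (r ^ 2) ∧
      powerSum a (r ^ 2) ≤ C * kernelGrowth m r := by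
    filter_upwards [eventually_ge_atTop R] with r hr
    have hnorm : ‖(r : ℂ)‖ = r := Complex.norm_of_nonneg (hR.le.trans hr)
    have hKr := hK r (by rwa [hnorm])
    rw [kernelNormSq_eq_powerSum, hnorm] at hKr
    exact hKr
  have hsum := summable_mul_pow_of_eventually_le ha hc (hS.mono fun _ => And.left)
  obtain ⟨R₀, hR₀⟩ := eventually_atTop.1 <|
    (eventually_le_sqWeightedPowerSum hm hc hC.le ha hsum hS).and <|
    (eventually_sqWeightedPowerSum_le hm hC.le ha hsum (hS.mono fun _ => And.right)).and <|
    hS.and (eventually_gt_atTop 0)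
  refine ⟨(1 - Real.exp (-m / 2)) ^ 2 / 2 * min c 1, 8 * Real.exp (2 * m) * C * max 1 c⁻¹,
    max R₀ 1, ?_, by positivity, by positivity, fun w hw => ?_⟩
  · have := one_sub_exp_neg_half_pos hm
    positivity
  obtain ⟨hlo, hup, ⟨hcS, -⟩, hr⟩ := hR₀ ‖w‖ (le_of_max_le_left hw)
  rw [kernelNormSq_eq_powerSum, kernelDerivNormSq_eq_sqWeightedPowerSum,
    rpow_three_mul_sub_four_mul_exp hr]
  exact two_sided_bounds_of_le (by positivity) (kernelGrowth_pos hr).le hc (by positivity)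
    (by positivity) hcS hlo hup
end

section
/- Let 0 < p < ∞ and m > 0, and let ‖z^n‖_{(m,p)} denote the F_{(m,p)}-norm of the monomial z^n. Then the ratio n ‖z^{n-1}‖_{(m,p)} / ‖z^n‖_{(m,p)} equals n (2π)^{0} p^{p/m} (Γ((p(n-1)+2)/m) / Γ((pn+2)/m))^{1/p}, and in particular the operator norm lower bound ‖D z^n‖_{(m,p)} / ‖z^n‖_{(m,p)} grows like n^{1 - 1/m} up to constants as n → ∞; hence D is unbounded on F_{(m,p)} whenever m > 1. -/
open MeasureTheory Real Complex

/-- The `F_{(m,p)}`-norm of the monomial `z ^ n`. -/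
noncomputable def monomialNorm (m p : ℝ) (n : ℕ) : ℝ :=
  (∫ z : ℂ, ‖z‖ ^ (p * (n : ℝ)) * Real.exp (-p * ‖z‖ ^ m)) ^ (1 / p)

open Set Filter Topology

/-!
In polar coordinates `‖z ^ n‖ ^ p = (2π / m) p ^ (-s) Γ(s)` with `s = (pn + 2) / m`, so that
`n ‖z ^ (n - 1)‖ / ‖z ^ n‖ = n (p ^ a Γ(x) / Γ(x + a)) ^ (1 / p)` with `a = p / m` and
`x = (p(n - 1) + 2) / m`. Comparing slopes of the convex function `log ∘ Γ`, whose increments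
over unit intervals are `log Γ(y + 1) - log Γ(y) = log y`, squeezes `Γ(x) / Γ(x + a)` between
`(x + a) ^ (-a)` and `(x - 1) ^ (-a)`. Hence the quotient is asymptotic to
`m ^ (1 / m) n ^ (1 - 1 / m)`, which tends to infinity when `m > 1`.
-/

theorem Complex.integral_rpow_mul_exp_neg_mul_rpow_of_pos {m q b : ℝ} (hm : 0 < m)
    (hq : -2 < q) (hb : 0 < b) :
    ∫ x : ℂ, ‖x‖ ^ q * rexp (-b * ‖x‖ ^ m) =
      (2 * π / m) * b ^ (-(q + 2) / m) * Real.Gamma ((q + 2) / m) := by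
  have hball : volume.real (Metric.ball (0 : ℂ) 1) = π := by
    simp [measureReal_def]
  rw [integral_fun_norm_addHaar volume (fun y ↦ y ^ q * rexp (-b * y ^ m)),
    Complex.finrank_real_complex, hball]
  have hpow : ∫ y in Ioi (0 : ℝ), y ^ (2 - 1) • (y ^ q * rexp (-b * y ^ m)) =
      ∫ y in Ioi (0 : ℝ), y ^ (q + 1) * rexp (-b * y ^ m) := by
    refine setIntegral_congr_fun measurableSet_Ioi fun y (hy : 0 < y) ↦ ?_
    rw [smul_eq_mul, rpow_add hy, rpow_one]
    ring
  rw [hpow, _root_.integral_rpow_mul_exp_neg_mul_rpow hm (by linarith) hb, nsmul_eq_mul,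
    smul_eq_mul, add_assoc, one_add_one_eq_two]
  push_cast
  ring

namespace Real

theorem mul_rpow_div_rpow_one_sub {x u r : ℝ} (hx : 0 < x) (hu : 0 ≤ u) :
    x * u ^ r / x ^ (1 - r) = (x * u) ^ r := by
  have hpow : x / x ^ (1 - r) = x ^ r := by
    rw [div_eq_iff (by positivity), ← rpow_add hx, add_sub_cancel, rpow_one]
  rw [mul_rpow hx.le hu, mul_div_right_comm, hpow]

theorem log_Gamma_add_one_sub_log_Gamma {y : ℝ} (hy : 0 < y) :
    log (Gamma (y + 1)) - log (Gamma y) = log y := by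
  rw [Gamma_add_one hy.ne', log_mul hy.ne' (Gamma_pos_of_pos hy).ne']
  ring

theorem mul_log_sub_one_le_log_Gamma_add_sub {a x : ℝ} (ha : 0 < a) (hx : 1 < x) :
    a * log (x - 1) ≤ log (Gamma (x + a)) - log (Gamma x) := by
  have hslope := convexOn_log_Gamma.slope_mono_adjacent (x := x - 1) (y := x) (z := x + a)
    (by simp; linarith) (by simp; linarith) (by linarith) (by linarith)
  have hstep := log_Gamma_add_one_sub_log_Gamma (y := x - 1) (by linarith)
  rw [sub_add_cancel] at hstep
  simp only [Function.comp_apply, sub_sub_cancel, div_one, add_sub_cancel_left, hstep] at hslope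
  rwa [le_div_iff₀ ha, mul_comm] at hslope

theorem log_Gamma_add_sub_le_mul_log {a x : ℝ} (ha : 0 < a) (hx : 0 < x) :
    log (Gamma (x + a)) - log (Gamma x) ≤ a * log (x + a) := by
  have hslope := convexOn_log_Gamma.slope_mono_adjacent (x := x) (y := x + a) (z := x + a + 1)
    (by simpa using hx) (by simp; linarith) (by linarith) (by linarith)
  simp only [Function.comp_apply, add_sub_cancel_left, div_one,
    log_Gamma_add_one_sub_log_Gamma (by linarith : 0 < x + a)] at hslope
  rwa [div_le_iff₀ ha, mul_comm] at hslope

theorem Gamma_div_Gamma_add_eq_exp {a x : ℝ} (hx : 0 < x) (hxa : 0 < x + a) :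
    Gamma x / Gamma (x + a) = exp (-(log (Gamma (x + a)) - log (Gamma x))) := by
  rw [neg_sub, exp_sub, exp_log (Gamma_pos_of_pos hx), exp_log (Gamma_pos_of_pos hxa)]

theorem rpow_neg_le_Gamma_div_Gamma_add {a x : ℝ} (ha : 0 < a) (hx : 0 < x) :
    (x + a) ^ (-a) ≤ Gamma x / Gamma (x + a) := by
  rw [Gamma_div_Gamma_add_eq_exp hx (by linarith), rpow_def_of_pos (by linarith)]
  exact exp_le_exp.mpr (by nlinarith [log_Gamma_add_sub_le_mul_log ha hx])

theorem Gamma_div_Gamma_add_le_rpow_neg {a x : ℝ} (ha : 0 < a) (hx : 1 < x) :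
    Gamma x / Gamma (x + a) ≤ (x - 1) ^ (-a) := by
  rw [Gamma_div_Gamma_add_eq_exp (by linarith) (by linarith), rpow_def_of_pos (by linarith)]
  exact exp_le_exp.mpr (by nlinarith [mul_log_sub_one_le_log_Gamma_add_sub ha hx])

end Real

section
variable {m p : ℝ}

theorem monomialNorm_eq (hm : 0 < m) (hp : 0 < p) (n : ℕ) :
    monomialNorm m p n =
      (2 * π / m * p ^ (-(p * n + 2) / m) * Real.Gamma ((p * n + 2) / m)) ^ (1 / p) :=
  congrArg (· ^ (1 / p)) <| Complex.integral_rpow_mul_exp_neg_mul_rpow_of_pos hm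
    (by nlinarith [n.cast_nonneg (α := ℝ)]) hp

theorem monomialNorm_pos (hm : 0 < m) (hp : 0 < p) (n : ℕ) : 0 < monomialNorm m p n := by
  rw [monomialNorm_eq hm hp]
  have := Real.Gamma_pos_of_pos (by positivity : 0 < (p * n + 2) / m)
  positivity

/-- The quotient `‖D z ^ n‖ / ‖z ^ n‖ = n ‖z ^ (n - 1)‖ / ‖z ^ n‖`. -/
noncomputable def derivNormRatio (m p : ℝ) (n : ℕ) : ℝ :=
  n * monomialNorm m p (n - 1) / monomialNorm m p n

theorem derivNormRatio_eq (hm : 0 < m) (hp : 0 < p) {n : ℕ} (hn : 1 ≤ n) :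
    derivNormRatio m p n = n * (p ^ (p / m) *
      (Real.Gamma ((p * ((n : ℝ) - 1) + 2) / m) / Real.Gamma ((p * n + 2) / m))) ^ (1 / p) := by
  have hx : 0 < (p * ((n : ℝ) - 1) + 2) / m := by
    have : (1 : ℝ) ≤ n := by exact_mod_cast hn
    apply div_pos _ hm; nlinarith
  have hpow : p ^ (-(p * ((n : ℝ) - 1) + 2) / m) = p ^ (p / m) * p ^ (-(p * n + 2) / m) := by
    rw [← rpow_add hp]; ring_nf
  have hΓ₀ := Real.Gamma_pos_of_pos hx
  have hΓ₁ := Real.Gamma_pos_of_pos (by positivity : 0 < (p * n + 2) / m)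
  rw [derivNormRatio, mul_div_assoc, monomialNorm_eq hm hp, monomialNorm_eq hm hp,
    Nat.cast_sub hn, Nat.cast_one, ← div_rpow (by positivity) (by positivity), hpow]
  congr 2
  field_simp

theorem rpow_mul_rpow_neg_rpow_one_div (hm : 0 < m) (hp : 0 < p) {y : ℝ} (hy : 0 < y) :
    (p ^ (p / m) * y ^ (-(p / m))) ^ (1 / p) = (p / y) ^ (1 / m) := by
  rw [rpow_neg hy.le, ← div_eq_mul_inv, ← div_rpow hp.le hy.le,
    ← rpow_mul (div_nonneg hp.le hy.le)]
  congr 1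
  field_simp

theorem le_derivNormRatio (hm : 0 < m) (hp : 0 < p) {n : ℕ} (hn : 1 ≤ n) :
    n * (p * m / (p * n + 2)) ^ (1 / m) ≤ derivNormRatio m p n := by
  have hx : 0 < (p * ((n : ℝ) - 1) + 2) / m := by
    have : (1 : ℝ) ≤ n := by exact_mod_cast hn
    apply div_pos _ hm; nlinarith
  have hΓ := Real.rpow_neg_le_Gamma_div_Gamma_add (div_pos hp hm) hx
  have hxa : (p * ((n : ℝ) - 1) + 2) / m + p / m = (p * n + 2) / m := by ring
  rw [hxa] at hΓ
  rw [derivNormRatio_eq hm hp hn, ← div_div_eq_mul_div,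
    ← rpow_mul_rpow_neg_rpow_one_div hm hp (by positivity)]
  gcongr

theorem derivNormRatio_le (hm : 0 < m) (hp : 0 < p) {n : ℕ} (hn : 1 ≤ n)
    (hmn : m + p < p * n + 2) :
    derivNormRatio m p n ≤ n * (p * m / (p * n + (2 - p - m))) ^ (1 / m) := by
  have hx : 1 < (p * ((n : ℝ) - 1) + 2) / m := by
    rw [one_lt_div hm]; linarith
  have hΓ := Real.Gamma_div_Gamma_add_le_rpow_neg (div_pos hp hm) hx
  have hxa : (p * ((n : ℝ) - 1) + 2) / m + p / m = (p * n + 2) / m := by ring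
  have hx1 : (p * ((n : ℝ) - 1) + 2) / m - 1 = (p * n + (2 - p - m)) / m := by
    field_simp; ring
  rw [hxa, hx1] at hΓ
  rw [derivNormRatio_eq hm hp hn, ← div_div_eq_mul_div,
    ← rpow_mul_rpow_neg_rpow_one_div hm hp (by apply div_pos _ hm; linarith)]
  gcongr

theorem tendsto_natCast_mul_div_add_rpow (hm : 0 < m) (hp : p ≠ 0) (d : ℝ) :
    Tendsto (fun n : ℕ ↦ (n * (p * m / (p * n + d))) ^ (1 / m)) atTop (𝓝 (m ^ (1 / m))) := by
  refine Tendsto.rpow_const ?_ (Or.inl hm.ne')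
  have h := (tendsto_natCast_div_add_atTop (d / p)).const_mul m
  rw [mul_one] at h
  refine h.congr fun n ↦ ?_
  rw [show (n : ℝ) + d / p = (p * n + d) / p by field_simp, div_div_eq_mul_div]
  ring

theorem tendsto_derivNormRatio_div_rpow (hm : 0 < m) (hp : 0 < p) :
    Tendsto (fun n : ℕ ↦ derivNormRatio m p n / (n : ℝ) ^ (1 - 1 / m)) atTop
      (𝓝 (m ^ (1 / m))) := by
  have hlarge : ∀ᶠ n : ℕ in atTop, 1 ≤ n ∧ m + p < p * n + 2 :=
    (eventually_ge_atTop 1).and <|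
      ((tendsto_natCast_atTop_atTop.const_mul_atTop hp).eventually_gt_atTop (m + p)).mono
        fun n h ↦ by linarith
  refine tendsto_of_tendsto_of_tendsto_of_le_of_le'
    (tendsto_natCast_mul_div_add_rpow hm hp.ne' 2)
    (tendsto_natCast_mul_div_add_rpow hm hp.ne' (2 - p - m)) ?_ ?_
  · filter_upwards [hlarge] with n ⟨hn, _⟩
    have : (0 : ℝ) < n := by exact_mod_cast hn
    rw [← mul_rpow_div_rpow_one_sub (by positivity) (by positivity)]
    gcongr
    exact le_derivNormRatio hm hp hn
  · filter_upwards [hlarge] with n ⟨hn, hmn⟩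
    have : (0 : ℝ) < n := by exact_mod_cast hn
    rw [← mul_rpow_div_rpow_one_sub (by positivity) (div_nonneg (by positivity) (by linarith))]
    gcongr
    exact derivNormRatio_le hm hp hn hmn

theorem tendsto_derivNormRatio_atTop (hm : 1 < m) (hp : 0 < p) :
    Tendsto (derivNormRatio m p) atTop atTop := by
  have hm₀ : 0 < m := by linarith
  have hexp : 0 < 1 - 1 / m := by rw [sub_pos, div_lt_one hm₀]; exact hm
  refine ((tendsto_derivNormRatio_div_rpow hm₀ hp).pos_mul_atTop (by positivity)
    ((tendsto_rpow_atTop hexp).comp tendsto_natCast_atTop_atTop)).congr' ?_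
  filter_upwards [eventually_ge_atTop 1] with n hn
  have : (0 : ℝ) < n := by exact_mod_cast hn
  exact div_mul_cancel₀ _ (by positivity)

theorem exists_mul_rpow_le_derivNormRatio_le (hm : 0 < m) (hp : 0 < p) :
    ∃ c C : ℝ, ∃ N : ℕ, 0 < c ∧ 0 < C ∧ ∀ n : ℕ, N ≤ n →
      c * (n : ℝ) ^ (1 - 1 / m) ≤ derivNormRatio m p n ∧
      derivNormRatio m p n ≤ C * (n : ℝ) ^ (1 - 1 / m) := by
  set L := m ^ (1 / m)
  have hL : 0 < L := by positivity
  obtain ⟨N, hN⟩ := eventually_atTop.mp <|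
    ((tendsto_derivNormRatio_div_rpow hm hp).eventually
      (Ioo_mem_nhds (half_lt_self hL) (by linarith : L < 2 * L))).and (eventually_ge_atTop 1)
  refine ⟨L / 2, 2 * L, N, by positivity, by positivity, fun n hn ↦ ?_⟩
  obtain ⟨⟨hlo, hhi⟩, hn₁⟩ := hN n hn
  have : (0 : ℝ) < n := by exact_mod_cast hn₁
  have hpos : (0 : ℝ) < (n : ℝ) ^ (1 - 1 / m) := by positivity
  exact ⟨((lt_div_iff₀ hpos).mp hlo).le, ((div_lt_iff₀ hpos).mp hhi).le⟩

end

theorem D_unbounded_from_monomials (m p : ℝ) (hm : 0 < m) (hp : 0 < p) :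
    (∀ n : ℕ, 1 ≤ n →
      (n : ℝ) * monomialNorm m p (n - 1) / monomialNorm m p n =
        (n : ℝ) * (p ^ (p / m) *
          (Real.Gamma ((p * ((n : ℝ) - 1) + 2) / m) /
            Real.Gamma ((p * (n : ℝ) + 2) / m))) ^ (1 / p)) ∧
    (∃ c C : ℝ, ∃ N : ℕ, 0 < c ∧ 0 < C ∧ ∀ n : ℕ, N ≤ n →
      c * (n : ℝ) ^ (1 - 1 / m) ≤ (n : ℝ) * monomialNorm m p (n - 1) / monomialNorm m p n ∧
      (n : ℝ) * monomialNorm m p (n - 1) / monomialNorm m p n ≤ C * (n : ℝ) ^ (1 - 1 / m)) ∧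
    (1 < m → ¬ ∃ K : ℝ, ∀ n : ℕ, 1 ≤ n →
      (n : ℝ) * monomialNorm m p (n - 1) ≤ K * monomialNorm m p n) := by
  refine ⟨fun n hn ↦ derivNormRatio_eq hm hp hn, exists_mul_rpow_le_derivNormRatio_le hm hp,
    fun hm₁ ⟨K, hK⟩ ↦ ?_⟩
  obtain ⟨n, hKn, hn⟩ := ((tendsto_derivNormRatio_atTop hm₁ hp).eventually_gt_atTop K).and
    (eventually_ge_atTop 1) |>.exists
  have hbounded : derivNormRatio m p n ≤ K :=
    (div_le_iff₀ (monomialNorm_pos hm hp n)).mpr (hK n hn)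
  exact hKn.not_ge hbounded
end
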